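/- Let a, c ∈ ℝ and σ > 0, and let Φ denote the cumulative distribution function of the standard normal distribution N(0,1). Then ∫_ℝ Φ((a − c·t)/σ) dγ(t) = Φ(a/√(σ² + c²)), where γ is the standard normal measure N(0,1) on ℝ. -/
import Mathlib


open MeasureTheory ProbabilityTheory Real
open scoped ENNReal NNReal

/-- The cumulative distribution function `Φ` of the standard normal distribution
`N(0,1)`: `Φ(z) = P_{T ~ N(0,1)}(T ≤ z)`. -/
noncomputable def stdCDF (z : ℝ) : ℝ := ((gaussianReal 0 1) (Set.Iic z)).toReal

namespace StdCDFAux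

/-- The rotation `(t, s) ↦ ((c t + σ s)/r, (σ t − c s)/r)` as a linear map. -/
noncomputable def rot (c σ r : ℝ) : ℝ × ℝ →ₗ[ℝ] ℝ × ℝ where
  toFun p := ((c * p.1 + σ * p.2) / r, (σ * p.1 - c * p.2) / r)
  map_add' p q := by
    ext <;> simp <;> ring
  map_smul' m p := by
    ext <;> simp <;> ring

lemma rot_apply (c σ r : ℝ) (p : ℝ × ℝ) :
    rot c σ r p = ((c * p.1 + σ * p.2) / r, (σ * p.1 - c * p.2) / r) := rfl

lemma rot_det (c σ r : ℝ) : LinearMap.det (rot c σ r) = -((c ^ 2 + σ ^ 2) / r ^ 2) := by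
  rw [← LinearMap.det_toMatrix (Module.Basis.finTwoProd ℝ), Matrix.det_fin_two]
  simp only [LinearMap.toMatrix_apply, Module.Basis.coe_finTwoProd_repr, Module.Basis.finTwoProd_zero,
    Module.Basis.finTwoProd_one, rot_apply]
  simp only [Fin.isValue, Matrix.cons_val_zero, Matrix.cons_val_one, Matrix.head_cons]
  ring

/-- The rotation preserves 2-dimensional Lebesgue measure when `r² = σ² + c²`. -/
lemma rot_measurePreserving {c σ r : ℝ} (hr : 0 < r) (h : r ^ 2 = σ ^ 2 + c ^ 2) :
    MeasurePreserving (rot c σ r) (volume : Measure (ℝ × ℝ)) volume := by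
  have hdet : LinearMap.det (rot c σ r) = -1 := by
    have h' : c ^ 2 + σ ^ 2 = r ^ 2 := by rw [h]; ring
    rw [rot_det, h', div_self (pow_ne_zero 2 hr.ne')]
  refine ⟨(rot c σ r).continuous_of_finiteDimensional.measurable, ?_⟩
  rw [Measure.map_linearMap_addHaar_eq_smul_addHaar volume (by rw [hdet]; norm_num), hdet]
  norm_num

/-- The density of the standard 2-dimensional Gaussian. -/
noncomputable def g2 (p : ℝ × ℝ) : ℝ≥0∞ := gaussianPDF 0 1 p.1 * gaussianPDF 0 1 p.2

lemma g2_measurable : Measurable g2 :=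
  ((measurable_gaussianPDF 0 1).comp measurable_fst).mul
    ((measurable_gaussianPDF 0 1).comp measurable_snd)

lemma g2_rot {c σ r : ℝ} (hr : r ≠ 0) (h : r ^ 2 = σ ^ 2 + c ^ 2) (p : ℝ × ℝ) :
    g2 (rot c σ r p) = g2 p := by
  have key : ∀ x y : ℝ, gaussianPDF 0 1 x * gaussianPDF 0 1 y
      = ENNReal.ofReal (((Real.sqrt (2 * π))⁻¹ * (Real.sqrt (2 * π))⁻¹)
          * rexp (-(x ^ 2 + y ^ 2) / 2)) := by
    intro x y
    rw [gaussianPDF, gaussianPDF, ← ENNReal.ofReal_mul (gaussianPDFReal_nonneg _ _ _)]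
    congr 1
    simp only [gaussianPDFReal, NNReal.coe_one, mul_one, sub_zero]
    rw [show -(x ^ 2 + y ^ 2) / 2 = -x ^ 2 / 2 + -y ^ 2 / 2 by ring, Real.exp_add]
    ring
  have hnorm : ((c * p.1 + σ * p.2) / r) ^ 2 + ((σ * p.1 - c * p.2) / r) ^ 2
      = p.1 ^ 2 + p.2 ^ 2 := by
    have h2 : r ^ 2 ≠ 0 := pow_ne_zero 2 hr
    field_simp
    rw [h]
    ring
  simp only [g2, rot_apply, key, hnorm]

/-- The product of two standard Gaussian measures as a density w.r.t. Lebesgue on `ℝ²`. -/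
lemma gaussian_prod_eq :
    (gaussianReal 0 1).prod (gaussianReal 0 1)
      = ((volume : Measure ℝ).prod volume).withDensity g2 := by
  refine Measure.prod_eq fun s t hs ht => ?_
  rw [withDensity_apply _ (hs.prod ht), ← Measure.prod_restrict,
    gaussianReal_apply 0 one_ne_zero s, gaussianReal_apply 0 one_ne_zero t]
  exact lintegral_prod_mul (measurable_gaussianPDF 0 1).aemeasurable
    (measurable_gaussianPDF 0 1).aemeasurable

end StdCDFAux

open StdCDFAux in
/-- **Gaussian smoothing of the standard normal CDF:** for `a, c ∈ ℝ` and `σ > 0`,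
`∫_ℝ Φ((a − c t)/σ) dγ(t) = Φ(a/√(σ² + c²))`, where `γ = N(0,1)` is the standard
normal measure on `ℝ`. -/
theorem integral_stdCDF_gaussian (a c σ : ℝ) (hσ : 0 < σ) :
    ∫ t, stdCDF ((a - c * t) / σ) ∂(gaussianReal 0 1) =
      stdCDF (a / Real.sqrt (σ ^ 2 + c ^ 2)) := by
  set γ := gaussianReal 0 1 with hγdef
  set r : ℝ := Real.sqrt (σ ^ 2 + c ^ 2) with hrdef
  have hr : 0 < r := Real.sqrt_pos.mpr (by positivity)
  have hr2 : r ^ 2 = σ ^ 2 + c ^ 2 := Real.sq_sqrt (by positivity)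
  set S : Set (ℝ × ℝ) := {p | c * p.1 + σ * p.2 ≤ a} with hSdef
  have hS : MeasurableSet S :=
    measurableSet_le (by fun_prop) measurable_const
  -- each slice of S is an interval
  have hslice : ∀ t : ℝ, Prod.mk t ⁻¹' S = Set.Iic ((a - c * t) / σ) := by
    intro t
    ext s
    simp only [Set.mem_preimage, hSdef, Set.mem_setOf_eq, Set.mem_Iic, le_div_iff₀ hσ]
    constructor <;> intro h <;> nlinarith
  -- the LHS equals the measure of S under the product Gaussian
  have hLHS : ∫ t, stdCDF ((a - c * t) / σ) ∂γ = ((γ.prod γ) S).toReal := by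
    rw [Measure.prod_apply hS]
    have : ∀ t : ℝ, stdCDF ((a - c * t) / σ) = (γ (Prod.mk t ⁻¹' S)).toReal := by
      intro t
      rw [hslice t]
      rfl
    simp_rw [this]
    exact integral_toReal (measurable_measure_prodMk_left hS).aemeasurable
      (ae_of_all _ fun t => measure_lt_top γ _)
  -- rotate: the measure of S equals the measure of a half-plane
  have hkey : (γ.prod γ) S = γ (Set.Iic (a / r)) := by
    have hmem : ∀ p : ℝ × ℝ, rot c σ r p ∈ S ↔ p ∈ Set.Iic (a / r) ×ˢ (Set.univ : Set ℝ) := by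
      intro p
      simp only [hSdef, rot_apply, Set.mem_setOf_eq, Set.mem_prod, Set.mem_univ, and_true,
        Set.mem_Iic]
      have hnum : c * ((c * p.1 + σ * p.2) / r) + σ * ((σ * p.1 - c * p.2) / r)
          = r * p.1 := by
        field_simp
        linear_combination (-p.1) * hr2
      rw [hnum]
      rw [mul_comm, ← le_div_iff₀ hr]
    calc (γ.prod γ) S = ∫⁻ p in S, g2 p ∂((volume : Measure ℝ).prod volume) := by
          rw [gaussian_prod_eq, withDensity_apply _ hS]
      _ = ∫⁻ p, S.indicator g2 p ∂((volume : Measure ℝ).prod volume) :=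
          (lintegral_indicator hS g2).symm
      _ = ∫⁻ p, S.indicator g2 (rot c σ r p) ∂((volume : Measure ℝ).prod volume) := by
          exact ((rot_measurePreserving hr hr2).lintegral_comp
            (g2_measurable.indicator hS)).symm
      _ = ∫⁻ p, (Set.Iic (a / r) ×ˢ (Set.univ : Set ℝ)).indicator g2 p
            ∂((volume : Measure ℝ).prod volume) := by
          refine lintegral_congr fun p => ?_
          rw [Set.indicator_apply, Set.indicator_apply, g2_rot hr.ne' hr2 p]
          by_cases hp : p ∈ Set.Iic (a / r) ×ˢ (Set.univ : Set ℝ)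
          · rw [if_pos ((hmem p).mpr hp), if_pos hp]
          · rw [if_neg (fun hmem' => hp ((hmem p).mp hmem')), if_neg hp]
      _ = ∫⁻ p in Set.Iic (a / r) ×ˢ (Set.univ : Set ℝ), g2 p
            ∂((volume : Measure ℝ).prod volume) :=
          lintegral_indicator (measurableSet_Iic.prod MeasurableSet.univ) g2
      _ = (γ.prod γ) (Set.Iic (a / r) ×ˢ (Set.univ : Set ℝ)) := by
          rw [gaussian_prod_eq, withDensity_apply _ (measurableSet_Iic.prod MeasurableSet.univ)]
      _ = γ (Set.Iic (a / r)) * γ Set.univ := by rw [Measure.prod_prod]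
      _ = γ (Set.Iic (a / r)) := by simp
  rw [hLHS, hkey]
  rfl
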